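/- Let q ∈ (0,∞) and let (X,ρ,μ) be a space of homogeneous type satisfying the weak reverse doubling (WRD) condition. Then there exists a positive constant C such that for every x ∈ X, liminf_{s→0⁺} s·∫_{X∖B(x,s^{−1/q})} 1/(U(x,y)·ρ(x,y)^{sq}) dμ(y) ≥ C. -/

import Mathlib

/-!
Iterating weak reverse doubling at `x₀` gives `2 μ(B(x₀, r)) ≤ μ(B(x₀, λʲ r))` for large `r`, and
the quasi-triangle inequality transfers this to every centre: with `Λ = K₀ (1 + 2 K₀ λʲ)`, for all
`R ≥ max(r₀, ρ(x, x₀))` the annulus `B(x, ΛR) \ B(x, R)` carries at least half of `μ(B(x, ΛR))`.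
On it `U(x, y) ≤ μ(B(x, ΛR))` and `ρ(x, y) < ΛR`, so the annulus contributes at least
`(ΛR)^{-sq} / 2` to the integral. Summing over the `n` annuli between `R` and `Λⁿ R`, with
`R = s^{-1/q}` and `n = ⌈1/s⌉`, gives at least `s n Λ^{-nsq} s^s / 2 ≥ Λ^{-2q} e⁻¹ / 2`, since
`1 ≤ s n ≤ 2` and `s^s ≥ e⁻¹`.
-/

noncomputable section

open MeasureTheory Filter Set
open scoped ENNReal NNReal Topology

namespace Paper

variable {X : Type*} [MeasurableSpace X]

/-- The ball with center `x` and radius `r` for the quasi-metric `ρ`. -/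
def ball (ρ : X → X → ℝ) (x : X) (r : ℝ) : Set X := {y | ρ x y < r}

/-- `(X, ρ, μ)` is a quasi-metric measure space with quasi-triangle constant `K₀`:
`ρ` is a quasi-metric with constant `K₀` and all `ρ`-balls are `μ`-measurable. -/
structure IsQuasiMetricMeasure (ρ : X → X → ℝ) (μ : Measure X) (K₀ : ℝ) : Prop where
  nonneg : ∀ x y, 0 ≤ ρ x y
  eq_zero_iff : ∀ x y, ρ x y = 0 ↔ x = y
  symm : ∀ x y, ρ x y = ρ y x
  one_le : 1 ≤ K₀
  triangle : ∀ x y z, ρ x z ≤ K₀ * (ρ x y + ρ y z)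
  measurableSet_ball : ∀ x r, MeasurableSet (ball ρ x r)

/-- The doubling condition for `μ` with doubling constant `L ∈ [1, ∞)`:
`0 < μ(B(x,2r)) ≤ L · μ(B(x,r)) < ∞` for all `x` and `r > 0`. -/
def IsDoubling (ρ : X → X → ℝ) (μ : Measure X) (L : ℝ≥0∞) : Prop :=
  1 ≤ L ∧ L < ∞ ∧ ∀ (x : X) (r : ℝ), 0 < r →
    0 < μ (ball ρ x r) ∧ μ (ball ρ x (2 * r)) ≤ L * μ (ball ρ x r) ∧ μ (ball ρ x r) < ∞

/-- `U(x,y) := min{μ(B(x,ρ(x,y))), μ(B(y,ρ(x,y)))}`. -/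
def U (ρ : X → X → ℝ) (μ : Measure X) (x y : X) : ℝ≥0∞ :=
  min (μ (ball ρ x (ρ x y))) (μ (ball ρ y (ρ x y)))

/-- The weak reverse doubling (WRD) condition. -/
def WRD (ρ : X → X → ℝ) (μ : Measure X) : Prop :=
  ∃ (x₀ : X) (lam C : ℝ), 1 < lam ∧ 1 < C ∧
    ENNReal.ofReal C ≤
      liminf (fun r : ℝ => μ (ball ρ x₀ (lam * r)) / μ (ball ρ x₀ r)) atTop


end Paper

namespace Paper

variable {X : Type*}

theorem ball_subset_ball {ρ : X → X → ℝ} {x : X} {r r' : ℝ} (h : r ≤ r') :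
    ball ρ x r ⊆ ball ρ x r' :=
  fun _ hy => lt_of_lt_of_le hy h

variable [MeasurableSpace X]

theorem IsQuasiMetricMeasure.ball_subset_ball_of_dist {ρ : X → X → ℝ} {μ : Measure X} {K₀ : ℝ}
    (hX : IsQuasiMetricMeasure ρ μ K₀) (x y : X) (r : ℝ) :
    ball ρ x r ⊆ ball ρ y (K₀ * (ρ y x + r)) := fun z (hz : ρ x z < r) =>
  calc ρ y z ≤ K₀ * (ρ y x + ρ x z) := hX.triangle y x z
    _ < K₀ * (ρ y x + r) := by gcongr; linarith [hX.one_le]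

theorem measure_le_two_mul_measure_sdiff (μ : Measure X) {s t : Set X} (hs : μ s ≠ ∞)
    (h : 2 * μ s ≤ μ t) : μ t ≤ 2 * μ (t \ s) := by
  have hsplit : μ t ≤ μ (t \ s) + μ s := tsub_le_iff_right.1 le_measure_sdiff
  have hle : μ s ≤ μ (t \ s) := by
    refine (ENNReal.add_le_add_iff_right hs).1 ?_
    rw [← two_mul]
    exact h.trans hsplit
  calc μ t ≤ μ (t \ s) + μ s := hsplit
    _ ≤ μ (t \ s) + μ (t \ s) := by gcongr
    _ = 2 * μ (t \ s) := (two_mul _).symm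

theorem pow_mul_le_of_mul_le {g : ℝ → ℝ≥0∞} {c : ℝ≥0∞} {lam r₀ : ℝ} (hlam : 1 ≤ lam)
    (hr₀ : 0 ≤ r₀) (h : ∀ r, r₀ ≤ r → c * g r ≤ g (lam * r)) (n : ℕ) {r : ℝ} (hr : r₀ ≤ r) :
    c ^ n * g r ≤ g (lam ^ n * r) := by
  induction n with
  | zero => simp
  | succ n ih =>
    have hr' : r₀ ≤ lam ^ n * r :=
      hr.trans (le_mul_of_one_le_left (hr₀.trans hr) (one_le_pow₀ hlam))
    calc c ^ (n + 1) * g r = c * (c ^ n * g r) := by ring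
      _ ≤ c * g (lam ^ n * r) := by gcongr
      _ ≤ g (lam * (lam ^ n * r)) := h _ hr'
      _ = g (lam ^ (n + 1) * r) := by rw [pow_succ', mul_assoc]

theorem exists_two_mul_le_pow_mul_of_le_liminf {g : ℝ → ℝ≥0∞} {lam C : ℝ} (hlam : 1 < lam)
    (hC : 1 < C) (h : ENNReal.ofReal C ≤ liminf (fun r => g (lam * r) / g r) atTop) :
    ∃ (n : ℕ) (r₀ : ℝ), 0 < r₀ ∧ ∀ r, r₀ ≤ r → 2 * g r ≤ g (lam ^ n * r) := by
  obtain ⟨c, hc1, hcC⟩ := exists_between hC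
  have hev : ∀ᶠ r in atTop, ENNReal.ofReal c < g (lam * r) / g r :=
    eventually_lt_of_lt_liminf
      (((ENNReal.ofReal_lt_ofReal_iff (by linarith)).2 hcC).trans_le h)
  obtain ⟨r₁, hr₁⟩ := eventually_atTop.1 hev
  obtain ⟨n, hn⟩ := pow_unbounded_of_one_lt 2 hc1
  refine ⟨n, max r₁ 1, by positivity, fun r hr => ?_⟩
  have hstep : ∀ r, max r₁ 1 ≤ r → ENNReal.ofReal c * g r ≤ g (lam * r) := fun r hr =>
    ENNReal.mul_le_of_le_div (hr₁ r (le_of_max_le_left hr)).le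
  calc 2 * g r ≤ ENNReal.ofReal c ^ n * g r := by
        gcongr
        rw [← ENNReal.ofReal_pow (by linarith), ← ENNReal.ofReal_ofNat]
        exact ENNReal.ofReal_le_ofReal hn.le
    _ ≤ g (lam ^ n * r) := pow_mul_le_of_mul_le hlam.le (by positivity) hstep n hr

theorem IsQuasiMetricMeasure.measure_ball_le_two_mul_measure_annulus {ρ : X → X → ℝ}
    {μ : Measure X} {K₀ : ℝ} (hX : IsQuasiMetricMeasure ρ μ K₀) {x₀ : X} {Λ₀ r₀ : ℝ}
    (hgrowth : ∀ r, r₀ ≤ r → 2 * μ (ball ρ x₀ r) ≤ μ (ball ρ x₀ (Λ₀ * r))) {x : X} {R : ℝ}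
    (hR₀ : r₀ ≤ R) (hRx : ρ x x₀ ≤ R) (hfin : μ (ball ρ x R) ≠ ∞) :
    μ (ball ρ x (K₀ * (1 + 2 * K₀ * Λ₀) * R)) ≤
      2 * μ (ball ρ x (K₀ * (1 + 2 * K₀ * Λ₀) * R) \ ball ρ x R) := by
  have hK₀ : 0 ≤ K₀ := zero_le_one.trans hX.one_le
  have hinner : ball ρ x R ⊆ ball ρ x₀ (2 * K₀ * R) := by
    refine (hX.ball_subset_ball_of_dist x x₀ R).trans (ball_subset_ball ?_)
    rw [hX.symm x₀ x]
    nlinarith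
  have houter : ball ρ x₀ (Λ₀ * (2 * K₀ * R)) ⊆ ball ρ x (K₀ * (1 + 2 * K₀ * Λ₀) * R) := by
    refine (hX.ball_subset_ball_of_dist x₀ x _).trans (ball_subset_ball ?_)
    nlinarith
  have hr₀ : r₀ ≤ 2 * K₀ * R := hR₀.trans (by nlinarith [hX.nonneg x x₀, hX.one_le])
  refine measure_le_two_mul_measure_sdiff μ hfin ?_
  calc 2 * μ (ball ρ x R) ≤ 2 * μ (ball ρ x₀ (2 * K₀ * R)) := by gcongr
    _ ≤ μ (ball ρ x₀ (Λ₀ * (2 * K₀ * R))) := hgrowth _ hr₀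
    _ ≤ _ := measure_mono houter

def kernel (ρ : X → X → ℝ) (μ : Measure X) (e : ℝ) (x y : X) : ℝ≥0∞ :=
  1 / (U ρ μ x y * ENNReal.ofReal (ρ x y) ^ e)

theorem inv_two_mul_le_setLIntegral_kernel_annulus {ρ : X → X → ℝ} {μ : Measure X}
    (hmeas : ∀ x r, MeasurableSet (ball ρ x r)) {x : X} {r r' e : ℝ} (he : 0 ≤ e)
    (h0 : μ (ball ρ x r') ≠ 0) (htop : μ (ball ρ x r') ≠ ∞)
    (hann : μ (ball ρ x r') ≤ 2 * μ (ball ρ x r' \ ball ρ x r)) :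
    2⁻¹ * (ENNReal.ofReal r' ^ e)⁻¹ ≤ ∫⁻ y in ball ρ x r' \ ball ρ x r, kernel ρ μ e x y ∂μ := by
  set W := μ (ball ρ x r')
  set P := ENNReal.ofReal r' ^ e
  have hpt : ∀ y ∈ ball ρ x r' \ ball ρ x r, (W * P)⁻¹ ≤ kernel ρ μ e x y := by
    rintro y ⟨hy, -⟩
    rw [kernel, one_div]
    gcongr
    · exact (min_le_left _ _).trans (measure_mono (ball_subset_ball hy.le))
    · exact ENNReal.rpow_le_rpow (ENNReal.ofReal_le_ofReal hy.le) he
  calc 2⁻¹ * P⁻¹ = (W * P)⁻¹ * (2⁻¹ * W) := by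
        rw [ENNReal.mul_inv (.inl h0) (.inl htop),
          show W⁻¹ * P⁻¹ * (2⁻¹ * W) = W⁻¹ * W * (2⁻¹ * P⁻¹) by ring,
          ENNReal.inv_mul_cancel h0 htop, one_mul]
    _ ≤ (W * P)⁻¹ * μ (ball ρ x r' \ ball ρ x r) := by
        gcongr
        rwa [ENNReal.inv_mul_le_iff two_ne_zero ENNReal.ofNat_ne_top]
    _ = ∫⁻ _ in ball ρ x r' \ ball ρ x r, (W * P)⁻¹ ∂μ := (setLIntegral_const _ _).symm
    _ ≤ _ := setLIntegral_mono' ((hmeas x r').diff (hmeas x r)) hpt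

theorem nat_mul_le_setLIntegral_kernel_compl_ball {ρ : X → X → ℝ} {μ : Measure X}
    (hmeas : ∀ x r, MeasurableSet (ball ρ x r)) {x : X} {Λ R₁ e : ℝ} (hΛ : 1 ≤ Λ)
    (hR₁ : 0 ≤ R₁) (he : 0 ≤ e) (h0 : ∀ R, R₁ ≤ R → μ (ball ρ x (Λ * R)) ≠ 0)
    (htop : ∀ R, R₁ ≤ R → μ (ball ρ x (Λ * R)) ≠ ∞)
    (hann : ∀ R, R₁ ≤ R → μ (ball ρ x (Λ * R)) ≤ 2 * μ (ball ρ x (Λ * R) \ ball ρ x R))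
    (n : ℕ) {R : ℝ} (hR : R₁ ≤ R) :
    n * (2⁻¹ * (ENNReal.ofReal (Λ ^ n * R) ^ e)⁻¹) ≤
      ∫⁻ y in (ball ρ x R)ᶜ, kernel ρ μ e x y ∂μ := by
  induction n generalizing R with
  | zero => simp
  | succ n ih =>
    have hR0 : 0 ≤ R := hR₁.trans hR
    have hRΛR : R ≤ Λ * R := le_mul_of_one_le_left hR0 hΛ
    have hannulus := inv_two_mul_le_setLIntegral_kernel_annulus hmeas he (h0 R hR) (htop R hR)
      (hann R hR)
    have hfar := ih (hR.trans hRΛR)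
    rw [show Λ ^ n * (Λ * R) = Λ ^ (n + 1) * R by ring] at hfar
    have hdecomp : (ball ρ x (Λ * R))ᶜ ∪ (ball ρ x (Λ * R) \ ball ρ x R) = (ball ρ x R)ᶜ := by
      ext y
      have hsub : y ∈ ball ρ x R → y ∈ ball ρ x (Λ * R) := fun hy => ball_subset_ball hRΛR hy
      simp only [mem_union, mem_compl_iff, Set.mem_sdiff]
      tauto
    calc ((n + 1 : ℕ) : ℝ≥0∞) * (2⁻¹ * (ENNReal.ofReal (Λ ^ (n + 1) * R) ^ e)⁻¹)
        = n * (2⁻¹ * (ENNReal.ofReal (Λ ^ (n + 1) * R) ^ e)⁻¹)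
          + 2⁻¹ * (ENNReal.ofReal (Λ ^ (n + 1) * R) ^ e)⁻¹ := by push_cast; ring
      _ ≤ ∫⁻ y in (ball ρ x (Λ * R))ᶜ, kernel ρ μ e x y ∂μ
          + ∫⁻ y in ball ρ x (Λ * R) \ ball ρ x R, kernel ρ μ e x y ∂μ := by
          refine add_le_add hfar (le_trans ?_ hannulus)
          gcongr
          exact le_self_pow₀ hΛ n.succ_ne_zero
      _ = ∫⁻ y in (ball ρ x R)ᶜ, kernel ρ μ e x y ∂μ := by
          rw [← lintegral_union ((hmeas x (Λ * R)).diff (hmeas x R))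
            (disjoint_compl_left.mono_right sdiff_subset), hdecomp]

theorem exp_neg_one_le_rpow_self {s : ℝ} (hs : 0 < s) : Real.exp (-1) ≤ s ^ s := by
  rw [Real.rpow_def_of_pos hs, Real.exp_le_exp]
  have hlog := mul_le_mul_of_nonneg_right (Real.one_sub_inv_le_log_of_pos hs) hs.le
  rw [sub_mul, inv_mul_cancel₀ hs.ne', one_mul] at hlog
  linarith

theorem rpow_mul_exp_le_of_one_le_mul_le_two {Λ q s : ℝ} {n : ℕ} (hΛ : 1 ≤ Λ) (hq : 0 < q)
    (hs : 0 < s) (hn₁ : 1 ≤ s * n) (hn₂ : s * n ≤ 2) :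
    Λ ^ (-(2 * q)) * Real.exp (-1) / 2 ≤
      s * n * 2⁻¹ * ((Λ ^ n * s ^ (-(1 / q))) ^ (s * q))⁻¹ := by
  have hΛ₀ : 0 < Λ := zero_lt_one.trans_le hΛ
  have hsplit : ((Λ ^ n * s ^ (-(1 / q))) ^ (s * q))⁻¹ = Λ ^ (-(n * (s * q))) * s ^ s := by
    rw [Real.mul_rpow (by positivity) (by positivity), ← Real.rpow_natCast,
      ← Real.rpow_mul hΛ₀.le, ← Real.rpow_mul hs.le, mul_inv, ← Real.rpow_neg hΛ₀.le,
      ← Real.rpow_neg hs.le]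
    congr 2
    field_simp
  have hpow : Λ ^ (-(2 * q)) ≤ Λ ^ (-(n * (s * q))) :=
    Real.rpow_le_rpow_of_exponent_le hΛ (by nlinarith)
  rw [hsplit]
  calc Λ ^ (-(2 * q)) * Real.exp (-1) / 2 = 1 * 2⁻¹ * (Λ ^ (-(2 * q)) * Real.exp (-1)) := by ring
    _ ≤ s * n * 2⁻¹ * (Λ ^ (-(n * (s * q))) * s ^ s) := by
        gcongr
        exact exp_neg_one_le_rpow_self hs

theorem ofReal_rpow_mul_exp_le_mul_natCeil_inv {Λ q s : ℝ} (hΛ : 1 ≤ Λ) (hq : 0 < q)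
    (hs : 0 < s) (hs₁ : s ≤ 1) :
    ENNReal.ofReal (Λ ^ (-(2 * q)) * Real.exp (-1) / 2) ≤ ENNReal.ofReal s *
      (⌈s⁻¹⌉₊ * (2⁻¹ * (ENNReal.ofReal (Λ ^ ⌈s⁻¹⌉₊ * s ^ (-(1 / q))) ^ (s * q))⁻¹)) := by
  set n := ⌈s⁻¹⌉₊
  have hn₁ : 1 ≤ s * n := by
    simpa [hs.ne'] using mul_le_mul_of_nonneg_left (Nat.le_ceil s⁻¹) hs.le
  have hn₂ : s * n ≤ 2 := by
    have := mul_le_mul_of_nonneg_left (Nat.ceil_lt_add_one (inv_nonneg.2 hs.le)).le hs.le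
    rw [mul_add, mul_inv_cancel₀ hs.ne'] at this
    linarith
  have hT : 0 < Λ ^ n * s ^ (-(1 / q)) := by positivity
  rw [ENNReal.ofReal_rpow_of_pos hT, ← ENNReal.ofReal_inv_of_pos (by positivity),
    ← ENNReal.ofReal_natCast n, ← ENNReal.ofReal_ofNat 2, ← ENNReal.ofReal_inv_of_pos two_pos,
    ← ENNReal.ofReal_mul (by positivity), ← ENNReal.ofReal_mul (by positivity),
    ← ENNReal.ofReal_mul hs.le, ← mul_assoc, ← mul_assoc]
  exact ENNReal.ofReal_le_ofReal (rpow_mul_exp_le_of_one_le_mul_le_two hΛ hq hs hn₁ hn₂)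

theorem statement4 (ρ : X → X → ℝ) (μ : Measure X) (K₀ : ℝ) (L : ℝ≥0∞)
    (hX : IsQuasiMetricMeasure ρ μ K₀) (hL : IsDoubling ρ μ L) (hWRD : WRD ρ μ)
    (q : ℝ) (hq : 0 < q) :
    ∃ C : ℝ≥0∞, 0 < C ∧ ∀ x : X,
      C ≤ liminf (fun s : ℝ => ENNReal.ofReal s *
          ∫⁻ y in (ball ρ x (s ^ (-(1 / q))))ᶜ,
            1 / (U ρ μ x y * ENNReal.ofReal (ρ x y) ^ (s * q)) ∂μ) (𝓝[>] (0:ℝ)) := by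
  obtain ⟨x₀, lam, C, hlam, hC, hliminf⟩ := hWRD
  obtain ⟨j, r₀, hr₀, hgrowth⟩ := exists_two_mul_le_pow_mul_of_le_liminf
    (g := fun r => μ (ball ρ x₀ r)) hlam hC hliminf
  set Λ := K₀ * (1 + 2 * K₀ * lam ^ j)
  have hΛ : 1 ≤ Λ := by
    have := one_le_pow₀ (n := j) hlam.le
    exact one_le_mul_of_one_le_of_one_le hX.one_le (by nlinarith [hX.one_le])
  refine ⟨ENNReal.ofReal (Λ ^ (-(2 * q)) * Real.exp (-1) / 2),
    ENNReal.ofReal_pos.2 (by positivity), fun x => ?_⟩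
  set R₁ := max r₀ (ρ x x₀)
  have hR₁ : 0 < R₁ := lt_max_of_lt_left hr₀
  have hball (r : ℝ) (hr : 0 < r) : μ (ball ρ x r) ≠ 0 ∧ μ (ball ρ x r) ≠ ∞ :=
    ⟨(hL.2.2 x r hr).1.ne', (hL.2.2 x r hr).2.2.ne⟩
  have hΛR (R : ℝ) (hR : R₁ ≤ R) : 0 < Λ * R := mul_pos (one_pos.trans_le hΛ) (hR₁.trans_le hR)
  have hann (R : ℝ) (hR : R₁ ≤ R) :
      μ (ball ρ x (Λ * R)) ≤ 2 * μ (ball ρ x (Λ * R) \ ball ρ x R) :=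
    hX.measure_ball_le_two_mul_measure_annulus hgrowth (le_of_max_le_left hR)
      (le_of_max_le_right hR) (hball R (hR₁.trans_le hR)).2
  have hlarge : ∀ᶠ s in 𝓝[>] 0, R₁ ≤ s ^ (-(1 / q)) :=
    (tendsto_rpow_neg_nhdsGT_zero (by simpa using hq)).eventually_ge_atTop R₁
  refine le_liminf_of_le (by isBoundedDefault) ?_
  filter_upwards [hlarge, Ioo_mem_nhdsGT one_pos] with s hR ⟨hs₀, hs₁⟩
  have hintegral := nat_mul_le_setLIntegral_kernel_compl_ball hX.measurableSet_ball hΛ hR₁.le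
    (mul_nonneg hs₀.le hq.le) (fun R hR => (hball _ (hΛR R hR)).1)
    (fun R hR => (hball _ (hΛR R hR)).2) hann ⌈s⁻¹⌉₊ hR
  exact (ofReal_rpow_mul_exp_le_mul_natCeil_inv hΛ hq hs₀ hs₁.le).trans
    (mul_le_mul_right hintegral _)

end Paper
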